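/- Let C be an abelian category with enough projectives and injectives, X ⊆ C an (n+2)-rigid functorially finite subcategory with X^{⊥_{≤ n+1}} = ^{⊥_{≤ n+1}}X, and set R = X^{⊥_{≤ n+1}}. If T ⊆ R is a weak (n+2)-cluster tilting subcategory of the exact category R (i.e. T = T^{⊥_{≤ n+1, R}} = ^{⊥_{≤ n+1, R}}T, orthogonals computed in R), then X ⊆ T, and T is a weak (n+2)-cluster tilting subcategory of C. -/
import Mathlib


open CategoryTheory CategoryTheory.Limits CategoryTheory.Abelian

universe w v u

variable {C : Type u} [Category.{v} C] [Abelian C] [HasExt.{w} C]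

/-- The right orthogonal `X^{⊥_{≤ m}}`: objects `N` with `Ext^i(A, N) = 0` for all
`A ∈ X` and `1 ≤ i ≤ m`. -/
def rightPerpLE (X : Set C) (m : ℕ) : Set C :=
  {N | ∀ A ∈ X, ∀ i : ℕ, 1 ≤ i → i ≤ m → Subsingleton (Abelian.Ext A N i)}

/-- The left orthogonal `^{⊥_{≤ m}}X`. -/
def leftPerpLE (X : Set C) (m : ℕ) : Set C :=
  {M | ∀ A ∈ X, ∀ i : ℕ, 1 ≤ i → i ≤ m → Subsingleton (Abelian.Ext M A i)}

/-- `X` is `m+1`-rigid: `Ext^i(X, X') = 0` for all `X, X' ∈ X`, `1 ≤ i ≤ m`. -/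
def IsRigidLE (X : Set C) (m : ℕ) : Prop :=
  ∀ A ∈ X, ∀ B ∈ X, ∀ i : ℕ, 1 ≤ i → i ≤ m → Subsingleton (Abelian.Ext A B i)

/-- `g : A ⟶ M` is a right `X`-approximation (an `X`-precover) of `M`. -/
def IsPrecover (X : Set C) {A M : C} (g : A ⟶ M) : Prop :=
  A ∈ X ∧ ∀ A' ∈ X, ∀ h : A' ⟶ M, ∃ t : A' ⟶ A, t ≫ g = h

/-- `f : M ⟶ A` is a left `X`-approximation (an `X`-preenvelope) of `M`. -/
def IsPreenvelope (X : Set C) {A M : C} (f : M ⟶ A) : Prop :=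
  A ∈ X ∧ ∀ A' ∈ X, ∀ h : M ⟶ A', ∃ t : A ⟶ A', f ≫ t = h

/-- `X` is precovering in the full subcategory `D`. -/
def IsPrecoveringIn (D X : Set C) : Prop :=
  ∀ M ∈ D, ∃ (A : C) (g : A ⟶ M), IsPrecover X g

/-- `X` is preenveloping in the full subcategory `D`. -/
def IsPreenvelopingIn (D X : Set C) : Prop :=
  ∀ M ∈ D, ∃ (A : C) (f : M ⟶ A), IsPreenvelope X f

/-- `addClosure S` is the closure of `S` under finite direct sums and direct summands. -/
inductive addClosure (S : Set C) : C → Prop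
  | of {A : C} (h : A ∈ S) : addClosure S A
  | zero (O : C) (h : IsZero O) : addClosure S O
  | biprod {A B : C} : addClosure S A → addClosure S B → addClosure S (A ⊞ B)
  | retract {A B : C} (i : A ⟶ B) (r : B ⟶ A) (hir : i ≫ r = 𝟙 A) :
      addClosure S B → addClosure S A

/-- The class of projective objects of `C`, as a set. -/
def projSet : Set C := {P | Projective P}

/-- The class of injective objects of `C`, as a set. -/
def injSet : Set C := {I | Injective I}

/-- The projective objects of an extension-closed subcategory `R` (with the exact structure
inherited from `C`): objects `P ∈ R` with `Ext^1(P, N) = 0` (computed in `C`) for all `N ∈ R`. -/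
def projIn (R : Set C) : Set C :=
  {P | P ∈ R ∧ ∀ N ∈ R, Subsingleton (Abelian.Ext P N 1)}

/-- The injective objects of an extension-closed subcategory `R`. -/
def injIn (R : Set C) : Set C :=
  {I | I ∈ R ∧ ∀ N ∈ R, Subsingleton (Abelian.Ext N I 1)}

/-- `T` is an `m+1`-cluster-tilting subcategory of the (extension-closed, exact)
subcategory `D`: `T` is functorially finite in `D` and coincides with both of its
`≤ m` Ext-orthogonals computed in `D` (which, by comparison of extension groups,
are `D ∩ T^{⊥_{≤ m}}` and `D ∩ ^{⊥_{≤ m}}T`, orthogonals taken in `C`). -/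
def IsClusterTiltingIn (D T : Set C) (m : ℕ) : Prop :=
  T ⊆ D ∧ IsPrecoveringIn D T ∧ IsPreenvelopingIn D T ∧
  T = D ∩ rightPerpLE T m ∧ T = D ∩ leftPerpLE T m
/-- Lemma 4.7(1): with `R = X^{⊥_{≤ n+1}}` the reduction of `C` at `X`, if `T ⊆ R` is a
weak `(n+2)`-cluster-tilting subcategory of `R` (i.e. `T` equals both of its `≤ n+1`
Ext-orthogonals computed in `R`), then `X ⊆ T` and `T` is a weak `(n+2)`-cluster-tilting
subcategory of `C`. -/
theorem stmt16 [EnoughProjectives C] [EnoughInjectives C] (X : Set C) (n : ℕ)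
    (hrigid : IsRigidLE X (n + 1))
    (hprec : IsPrecoveringIn (Set.univ : Set C) X)
    (hpreenv : IsPreenvelopingIn (Set.univ : Set C) X)
    (heq : rightPerpLE X (n + 1) = leftPerpLE X (n + 1))
    (T : Set C) (hTR : T ⊆ rightPerpLE X (n + 1))
    (hT1 : T = rightPerpLE X (n + 1) ∩ rightPerpLE T (n + 1))
    (hT2 : T = rightPerpLE X (n + 1) ∩ leftPerpLE T (n + 1)) :
    X ⊆ T ∧ T = rightPerpLE T (n + 1) ∧ T = leftPerpLE T (n + 1) := by
  have hXT : X ⊆ T := by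
    intro A hA
    rw [hT1]
    constructor
    · exact fun B hB i h1 h2 => hrigid B hB A hA i h1 h2
    · intro B hB i h1 h2
      have : B ∈ leftPerpLE X (n + 1) := heq ▸ hTR hB
      exact this A hA i h1 h2
  refine ⟨hXT, ?_, ?_⟩
  · apply Set.Subset.antisymm
    · intro M hM
      exact (hT1 ▸ hM).2
    · intro M hM
      rw [hT1]
      exact ⟨fun A hA i h1 h2 => hM A (hXT hA) i h1 h2, hM⟩
  · apply Set.Subset.antisymm
    · intro M hM
      exact (hT2 ▸ hM).2
    · intro M hM
      rw [hT2]
      refine ⟨?_, hM⟩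
      rw [heq]
      exact fun A hA i h1 h2 => hM A (hXT hA) i h1 h2
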